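/- arXiv:1404.0241 — 10 statements merged into one kernel-verified Lean document; each statement's English description precedes it below -/
import Mathlib

section
/- Under the Picard-S iteration for a weak-contraction T with fixed point u*, for every n one has ‖x_{n+1} − u*‖ ≤ δ² [1 − a_n¹ a_n² (1 − δ)] ‖x_n − u*‖. -/
theorem picardS_one_step_estimate {E : Type*} [NormedAddCommGroup E] [NormedSpace ℝ E]
    (D : Set E) (hDne : D.Nonempty) (hDcl : IsClosed D) (hDconv : Convex ℝ D)
    (T : E → E) (hTD : Set.MapsTo T D D)
    (δ L : ℝ) (hδ : δ ∈ Set.Ioo (0 : ℝ) 1) (hL : 0 ≤ L)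
    (hT : ∀ x ∈ D, ∀ y ∈ D, ‖T x - T y‖ ≤ δ * ‖x - y‖ + L * ‖y - T y‖)
    (u : E) (huD : u ∈ D) (hu : T u = u)
    (a1 a2 : ℕ → ℝ) (ha1 : ∀ n, a1 n ∈ Set.Icc (0 : ℝ) 1) (ha2 : ∀ n, a2 n ∈ Set.Icc (0 : ℝ) 1)
    (x y z : ℕ → E) (hxD : ∀ n, x n ∈ D) (hyD : ∀ n, y n ∈ D) (hzD : ∀ n, z n ∈ D)
    (hx : ∀ n, x (n + 1) = T (y n))
    (hy : ∀ n, y n = (1 - a1 n) • T (x n) + a1 n • T (z n))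
    (hz : ∀ n, z n = (1 - a2 n) • x n + a2 n • T (x n)) :
    ∀ n, ‖x (n + 1) - u‖ ≤ δ ^ 2 * (1 - a1 n * a2 n * (1 - δ)) * ‖x n - u‖ := by
  obtain ⟨hδ0, hδ1⟩ := hδ
  have contr : ∀ w ∈ D, ‖T w - u‖ ≤ δ * ‖w - u‖ := by
    intro w hw
    have := hT w hw u huD
    simpa [hu, sub_self] using this
  intro n
  obtain ⟨ha10, ha11⟩ := ha1 n
  obtain ⟨ha20, ha21⟩ := ha2 n
  set a := a1 n
  set b := a2 n
  have hxn := hxD n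
  have hzn := hzD n
  have hxu0 : (0:ℝ) ≤ ‖x n - u‖ := norm_nonneg _
  -- bound on z
  have hzbound : ‖z n - u‖ ≤ (1 - b * (1 - δ)) * ‖x n - u‖ := by
    have h1 : z n - u = (1 - b) • (x n - u) + b • (T (x n) - u) := by
      rw [hz n]; module
    calc ‖z n - u‖ ≤ ‖(1 - b) • (x n - u)‖ + ‖b • (T (x n) - u)‖ := by
          rw [h1]; exact norm_add_le _ _
      _ = (1 - b) * ‖x n - u‖ + b * ‖T (x n) - u‖ := by
          rw [norm_smul, norm_smul, Real.norm_of_nonneg (by linarith),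
            Real.norm_of_nonneg ha20]
      _ ≤ (1 - b) * ‖x n - u‖ + b * (δ * ‖x n - u‖) := by
          have := contr (x n) hxn
          nlinarith
      _ = (1 - b * (1 - δ)) * ‖x n - u‖ := by ring
  -- bound on y
  have hybound : ‖y n - u‖ ≤ δ * (1 - a * b * (1 - δ)) * ‖x n - u‖ := by
    have h1 : y n - u = (1 - a) • (T (x n) - u) + a • (T (z n) - u) := by
      rw [hy n]; module
    calc ‖y n - u‖ ≤ ‖(1 - a) • (T (x n) - u)‖ + ‖a • (T (z n) - u)‖ := by
          rw [h1]; exact norm_add_le _ _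
      _ = (1 - a) * ‖T (x n) - u‖ + a * ‖T (z n) - u‖ := by
          rw [norm_smul, norm_smul, Real.norm_of_nonneg (by linarith),
            Real.norm_of_nonneg ha10]
      _ ≤ (1 - a) * (δ * ‖x n - u‖) + a * (δ * ((1 - b * (1 - δ)) * ‖x n - u‖)) := by
          have h2 := contr (x n) hxn
          have h3 := contr (z n) hzn
          have h4 : ‖T (z n) - u‖ ≤ δ * ((1 - b * (1 - δ)) * ‖x n - u‖) := by
            calc ‖T (z n) - u‖ ≤ δ * ‖z n - u‖ := h3
              _ ≤ δ * ((1 - b * (1 - δ)) * ‖x n - u‖) := by nlinarith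
          nlinarith
      _ = δ * (1 - a * b * (1 - δ)) * ‖x n - u‖ := by ring
  have hfac : (0:ℝ) ≤ 1 - a * b * (1 - δ) := by nlinarith [mul_nonneg ha10 ha20, mul_le_one₀ ha11 ha20 ha21]
  calc ‖x (n + 1) - u‖ = ‖T (y n) - u‖ := by rw [hx n]
    _ ≤ δ * ‖y n - u‖ := contr (y n) (hyD n)
    _ ≤ δ * (δ * (1 - a * b * (1 - δ)) * ‖x n - u‖) := by nlinarith
    _ = δ ^ 2 * (1 - a * b * (1 - δ)) * ‖x n - u‖ := by ring
end

section
/- Under the Picard-S iteration for a weak-contraction T with fixed point u*, one has for all n the estimate ‖x_{n+1} − u*‖ ≤ δ^{2(n+1)} (∏_{k=0}^{n} [1 − a_k¹ a_k² (1 − δ)]) ‖x_0 − u*‖. -/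
theorem picardS_product_estimate {E : Type*} [NormedAddCommGroup E] [NormedSpace ℝ E]
    (D : Set E) (hDne : D.Nonempty) (hDcl : IsClosed D) (hDconv : Convex ℝ D)
    (T : E → E) (hTD : Set.MapsTo T D D)
    (δ L : ℝ) (hδ : δ ∈ Set.Ioo (0 : ℝ) 1) (hL : 0 ≤ L)
    (hT : ∀ x ∈ D, ∀ y ∈ D, ‖T x - T y‖ ≤ δ * ‖x - y‖ + L * ‖y - T y‖)
    (u : E) (huD : u ∈ D) (hu : T u = u)
    (a1 a2 : ℕ → ℝ) (ha1 : ∀ n, a1 n ∈ Set.Icc (0 : ℝ) 1) (ha2 : ∀ n, a2 n ∈ Set.Icc (0 : ℝ) 1)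
    (x y z : ℕ → E) (hxD : ∀ n, x n ∈ D) (hyD : ∀ n, y n ∈ D) (hzD : ∀ n, z n ∈ D)
    (hx : ∀ n, x (n + 1) = T (y n))
    (hy : ∀ n, y n = (1 - a1 n) • T (x n) + a1 n • T (z n))
    (hz : ∀ n, z n = (1 - a2 n) • x n + a2 n • T (x n)) :
    ∀ n, ‖x (n + 1) - u‖ ≤
      δ ^ (2 * (n + 1)) * (∏ k ∈ Finset.range (n + 1), (1 - a1 k * a2 k * (1 - δ))) *
        ‖x 0 - u‖ := by
  obtain ⟨hδ0, hδ1⟩ := hδ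
  -- contraction towards the fixed point
  have hTu : ∀ w ∈ D, ‖T w - u‖ ≤ δ * ‖w - u‖ := by
    intro w hw
    have := hT w hw u huD
    rw [hu] at this
    simpa using this
  -- convex combination estimate
  have combo : ∀ t : ℝ, t ∈ Set.Icc (0:ℝ) 1 → ∀ p q : E,
      ‖((1 - t) • p + t • q) - u‖ ≤ (1 - t) * ‖p - u‖ + t * ‖q - u‖ := by
    intro t ht p q
    have heq : ((1 - t) • p + t • q) - u = (1 - t) • (p - u) + t • (q - u) := by
      module
    rw [heq]
    calc ‖(1 - t) • (p - u) + t • (q - u)‖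
        ≤ ‖(1 - t) • (p - u)‖ + ‖t • (q - u)‖ := norm_add_le _ _
      _ = (1 - t) * ‖p - u‖ + t * ‖q - u‖ := by
          rw [norm_smul, norm_smul, Real.norm_eq_abs, Real.norm_eq_abs,
            abs_of_nonneg (by linarith [ht.2]), abs_of_nonneg ht.1]
  -- one-step estimate
  have step : ∀ n, ‖x (n + 1) - u‖ ≤
      δ ^ 2 * (1 - a1 n * a2 n * (1 - δ)) * ‖x n - u‖ := by
    intro n
    obtain ⟨h10, h11⟩ := ha1 n
    obtain ⟨h20, h21⟩ := ha2 n
    have hxn := norm_nonneg (x n - u)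
    have hTx := hTu (x n) (hxD n)
    have hzest : ‖z n - u‖ ≤ (1 - a2 n * (1 - δ)) * ‖x n - u‖ := by
      rw [hz]
      calc ‖((1 - a2 n) • x n + a2 n • T (x n)) - u‖
          ≤ (1 - a2 n) * ‖x n - u‖ + a2 n * ‖T (x n) - u‖ :=
            combo (a2 n) ⟨h20, h21⟩ _ _
        _ ≤ (1 - a2 n * (1 - δ)) * ‖x n - u‖ := by nlinarith
    have hTz := hTu (z n) (hzD n)
    have hyest : ‖y n - u‖ ≤ δ * (1 - a1 n * a2 n * (1 - δ)) * ‖x n - u‖ := by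
      rw [hy]
      calc ‖((1 - a1 n) • T (x n) + a1 n • T (z n)) - u‖
          ≤ (1 - a1 n) * ‖T (x n) - u‖ + a1 n * ‖T (z n) - u‖ :=
            combo (a1 n) ⟨h10, h11⟩ _ _
        _ ≤ δ * (1 - a1 n * a2 n * (1 - δ)) * ‖x n - u‖ := by
            have e1 : a1 n * ‖T (z n) - u‖ ≤ a1 n * (δ * ((1 - a2 n * (1 - δ)) * ‖x n - u‖)) := by
              apply mul_le_mul_of_nonneg_left _ h10
              exact hTz.trans (mul_le_mul_of_nonneg_left hzest hδ0.le)
            have e2 : (1 - a1 n) * ‖T (x n) - u‖ ≤ (1 - a1 n) * (δ * ‖x n - u‖) :=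
              mul_le_mul_of_nonneg_left hTx (by linarith)
            nlinarith [e1, e2]
    have hTy := hTu (y n) (hyD n)
    rw [hx]
    calc ‖T (y n) - u‖ ≤ δ * ‖y n - u‖ := hTy
      _ ≤ δ ^ 2 * (1 - a1 n * a2 n * (1 - δ)) * ‖x n - u‖ := by nlinarith
  -- nonnegativity of factors
  have hfac : ∀ n, (0:ℝ) ≤ 1 - a1 n * a2 n * (1 - δ) := by
    intro n
    obtain ⟨h10, h11⟩ := ha1 n
    obtain ⟨h20, h21⟩ := ha2 n
    have h3 : a1 n * a2 n ≤ 1 := by nlinarith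
    nlinarith [mul_nonneg h10 h20]
  intro n
  induction n with
  | zero =>
      simpa [Finset.prod_range_one] using step 0
  | succ m ih =>
      have hprod : (0:ℝ) ≤ ∏ k ∈ Finset.range (m + 1), (1 - a1 k * a2 k * (1 - δ)) :=
        Finset.prod_nonneg fun k _ => hfac k
      have h1 : ‖x (m + 1 + 1) - u‖ ≤
          δ ^ 2 * (1 - a1 (m+1) * a2 (m+1) * (1 - δ)) * ‖x (m+1) - u‖ := step (m + 1)
      have h2 : δ ^ 2 * (1 - a1 (m+1) * a2 (m+1) * (1 - δ)) * ‖x (m+1) - u‖ ≤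
          δ ^ 2 * (1 - a1 (m+1) * a2 (m+1) * (1 - δ)) *
            (δ ^ (2 * (m + 1)) * (∏ k ∈ Finset.range (m + 1), (1 - a1 k * a2 k * (1 - δ))) *
              ‖x 0 - u‖) := by
        exact mul_le_mul_of_nonneg_left ih
          (mul_nonneg (pow_nonneg hδ0.le 2) (hfac (m + 1)))
      refine (h1.trans h2).trans (le_of_eq ?_)
      conv_rhs => rw [Finset.prod_range_succ]
      ring
end

section
/- Let T : D → D be a weak-contraction with a fixed point u*, and let {x_n} be the Picard-S iterative sequence with a_n¹, a_n² ∈ [0,1] satisfying ∑_{k=0}^{∞} a_k¹ a_k² = ∞. Then x_n converges to u*, and u* is the unique fixed point of T. -/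
theorem picardS_converges {E : Type*} [NormedAddCommGroup E] [NormedSpace ℝ E]
    (D : Set E) (hDne : D.Nonempty) (hDcl : IsClosed D) (hDconv : Convex ℝ D)
    (T : E → E) (hTD : Set.MapsTo T D D)
    (δ L : ℝ) (hδ : δ ∈ Set.Ioo (0 : ℝ) 1) (hL : 0 ≤ L)
    (hT : ∀ x ∈ D, ∀ y ∈ D, ‖T x - T y‖ ≤ δ * ‖x - y‖ + L * ‖y - T y‖)
    (u : E) (huD : u ∈ D) (hu : T u = u)
    (a1 a2 : ℕ → ℝ) (ha1 : ∀ n, a1 n ∈ Set.Icc (0 : ℝ) 1) (ha2 : ∀ n, a2 n ∈ Set.Icc (0 : ℝ) 1)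
    (hdiv : Filter.Tendsto (fun N => ∑ k ∈ Finset.range N, a1 k * a2 k) Filter.atTop Filter.atTop)
    (x y z : ℕ → E) (hxD : ∀ n, x n ∈ D) (hyD : ∀ n, y n ∈ D) (hzD : ∀ n, z n ∈ D)
    (hx : ∀ n, x (n + 1) = T (y n))
    (hy : ∀ n, y n = (1 - a1 n) • T (x n) + a1 n • T (z n))
    (hz : ∀ n, z n = (1 - a2 n) • x n + a2 n • T (x n)) :
    Filter.Tendsto x Filter.atTop (nhds u) ∧ ∀ v ∈ D, T v = v → v = u := by
  obtain ⟨hδ0, hδ1⟩ := hδ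
  -- key contraction at the fixed point
  have key : ∀ w ∈ D, ‖T w - u‖ ≤ δ * ‖w - u‖ := by
    intro w hw
    have := hT w hw u huD
    rw [hu] at this
    simpa using this
  have hzb : ∀ n, ‖z n - u‖ ≤ ‖x n - u‖ := by
    intro n
    obtain ⟨h0, h1⟩ := ha2 n
    have hsplit : z n - u = (1 - a2 n) • (x n - u) + a2 n • (T (x n) - u) := by
      rw [hz n]; module
    calc ‖z n - u‖ ≤ (1 - a2 n) * ‖x n - u‖ + a2 n * ‖T (x n) - u‖ := by
          rw [hsplit]
          refine (norm_add_le _ _).trans ?_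
          rw [norm_smul, norm_smul, Real.norm_of_nonneg (by linarith), Real.norm_of_nonneg h0]
      _ ≤ (1 - a2 n) * ‖x n - u‖ + a2 n * (δ * ‖x n - u‖) := by
          gcongr; exact key _ (hxD n)
      _ ≤ ‖x n - u‖ := by nlinarith [mul_nonneg h0 (norm_nonneg (x n - u))]
  have hyb : ∀ n, ‖y n - u‖ ≤ δ * ‖x n - u‖ := by
    intro n
    obtain ⟨h0, h1⟩ := ha1 n
    have hsplit : y n - u = (1 - a1 n) • (T (x n) - u) + a1 n • (T (z n) - u) := by
      rw [hy n]; module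
    calc ‖y n - u‖ ≤ (1 - a1 n) * ‖T (x n) - u‖ + a1 n * ‖T (z n) - u‖ := by
          rw [hsplit]
          refine (norm_add_le _ _).trans ?_
          rw [norm_smul, norm_smul, Real.norm_of_nonneg (by linarith), Real.norm_of_nonneg h0]
      _ ≤ (1 - a1 n) * (δ * ‖x n - u‖) + a1 n * (δ * ‖x n - u‖) := by
          have hTz : ‖T (z n) - u‖ ≤ δ * ‖x n - u‖ :=
            (key _ (hzD n)).trans (mul_le_mul_of_nonneg_left (hzb n) hδ0.le)
          exact add_le_add (mul_le_mul_of_nonneg_left (key _ (hxD n)) (by linarith))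
            (mul_le_mul_of_nonneg_left hTz h0)
      _ = δ * ‖x n - u‖ := by ring
  have hstep : ∀ n, ‖x (n + 1) - u‖ ≤ δ * ‖x n - u‖ := by
    intro n
    rw [hx n]
    refine (key _ (hyD n)).trans ?_
    calc δ * ‖y n - u‖ ≤ δ * (δ * ‖x n - u‖) := mul_le_mul_of_nonneg_left (hyb n) hδ0.le
      _ ≤ δ * ‖x n - u‖ := by nlinarith [mul_nonneg hδ0.le (norm_nonneg (x n - u))]
  have hgeom : ∀ n, ‖x n - u‖ ≤ δ ^ n * ‖x 0 - u‖ := by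
    intro n
    induction n with
    | zero => simp
    | succ n ih =>
      calc ‖x (n + 1) - u‖ ≤ δ * ‖x n - u‖ := hstep n
        _ ≤ δ * (δ ^ n * ‖x 0 - u‖) := by gcongr
        _ = δ ^ (n + 1) * ‖x 0 - u‖ := by ring
  constructor
  · rw [tendsto_iff_norm_sub_tendsto_zero]
    have h0 : Filter.Tendsto (fun n => δ ^ n * ‖x 0 - u‖) Filter.atTop (nhds 0) := by
      simpa using (tendsto_pow_atTop_nhds_zero_of_lt_one hδ0.le hδ1).mul_const ‖x 0 - u‖
    exact squeeze_zero (fun n => norm_nonneg _) hgeom h0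
  · intro v hv hTv
    have h := hT v hv u huD
    rw [hu, hTv] at h
    simp only [sub_self, norm_zero, mul_zero, add_zero] at h
    have : ‖v - u‖ ≤ 0 := by nlinarith [norm_nonneg (v - u)]
    have := le_antisymm this (norm_nonneg _)
    rwa [norm_eq_zero, sub_eq_zero] at this
end

section
/- Let T : D → D be a weak-contraction with fixed point u*, and let {x_n} and {q_n} be the Picard-S and SP iterative sequences respectively with common parameter sequences a_n⁰, a_n¹, a_n² ∈ [0,1] satisfying ∑ a_k¹ a_k² = ∞. If x_n → u*, then q_n → u*. -/
/-!
Since `T u = u`, the weak-contraction inequality with `y = u` gives `‖T v - u‖ ≤ δ ‖v - u‖`, so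
each of the three Mann-type substeps of the SP iteration shrinks the distance to `u` by a factor
`1 - (1 - δ) a`. Hence `‖q (n+1) - u‖ ≤ (1 - (1 - δ) a¹ₙ a²ₙ) ‖q n - u‖ ≤ exp (-(1 - δ) a¹ₙ a²ₙ) ‖q n - u‖`,
and the divergence of `∑ a¹ₖ a²ₖ` forces `q n → u`.
-/

open Filter Finset Real Topology

theorem le_exp_neg_sum_mul_of_le_one_sub_mul {e c : ℕ → ℝ} (he : ∀ n, 0 ≤ e n)
    (hrec : ∀ n, e (n + 1) ≤ (1 - c n) * e n) (n : ℕ) :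
    e n ≤ exp (-∑ k ∈ range n, c k) * e 0 := by
  induction n with
  | zero => simp
  | succ n ih =>
    calc e (n + 1) ≤ (1 - c n) * e n := hrec n
      _ ≤ exp (-c n) * e n := by
          gcongr
          · exact he n
          · linarith [add_one_le_exp (-c n)]
      _ ≤ exp (-c n) * (exp (-∑ k ∈ range n, c k) * e 0) := by gcongr
      _ = exp (-∑ k ∈ range (n + 1), c k) * e 0 := by
          rw [← mul_assoc, ← exp_add, sum_range_succ, neg_add, add_comm]

theorem tendsto_zero_of_le_one_sub_mul {e c : ℕ → ℝ} (he : ∀ n, 0 ≤ e n)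
    (hrec : ∀ n, e (n + 1) ≤ (1 - c n) * e n)
    (hc : Tendsto (fun N => ∑ k ∈ range N, c k) atTop atTop) :
    Tendsto e atTop (𝓝 0) := by
  have hexp : Tendsto (fun n => exp (-∑ k ∈ range n, c k) * e 0) atTop (𝓝 0) := by
    simpa using (tendsto_exp_atBot.comp (tendsto_neg_atTop_atBot.comp hc)).mul_const (e 0)
  exact squeeze_zero he (le_exp_neg_sum_mul_of_le_one_sub_mul he hrec) hexp

theorem norm_apply_sub_fixedPoint_le {E : Type*} [SeminormedAddCommGroup E] {D : Set E}
    {T : E → E} {δ L : ℝ}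
    (hT : ∀ x ∈ D, ∀ y ∈ D, ‖T x - T y‖ ≤ δ * ‖x - y‖ + L * ‖y - T y‖)
    {u : E} (huD : u ∈ D) (hu : T u = u) {v : E} (hv : v ∈ D) :
    ‖T v - u‖ ≤ δ * ‖v - u‖ := by
  simpa [hu] using hT v hv u huD

section MannStep

variable {E : Type*} [SeminormedAddCommGroup E] [NormedSpace ℝ E]

theorem norm_one_sub_smul_add_smul_sub_le {p w u : E} {δ a : ℝ}
    (hw : ‖w - u‖ ≤ δ * ‖p - u‖) (ha : a ∈ Set.Icc (0 : ℝ) 1) :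
    ‖(1 - a) • p + a • w - u‖ ≤ (1 - (1 - δ) * a) * ‖p - u‖ := by
  obtain ⟨ha0, ha1⟩ := ha
  calc ‖(1 - a) • p + a • w - u‖ = ‖(1 - a) • (p - u) + a • (w - u)‖ := by congr 1; module
    _ ≤ (1 - a) * ‖p - u‖ + a * ‖w - u‖ := by
        refine (norm_add_le _ _).trans_eq ?_
        rw [norm_smul, norm_smul, Real.norm_of_nonneg (sub_nonneg.2 ha1), Real.norm_of_nonneg ha0]
    _ ≤ (1 - a) * ‖p - u‖ + a * (δ * ‖p - u‖) := by gcongr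
    _ = (1 - (1 - δ) * a) * ‖p - u‖ := by ring

theorem norm_spStep_sub_le {D : Set E} {T : E → E} {u : E} {δ : ℝ} (hδ : δ ∈ Set.Icc (0 : ℝ) 1)
    (hTu : ∀ v ∈ D, ‖T v - u‖ ≤ δ * ‖v - u‖) {a0 a1 a2 : ℝ} (ha0 : a0 ∈ Set.Icc (0 : ℝ) 1)
    (ha1 : a1 ∈ Set.Icc (0 : ℝ) 1) (ha2 : a2 ∈ Set.Icc (0 : ℝ) 1) {q r s : E}
    (hqD : q ∈ D) (hrD : r ∈ D) (hsD : s ∈ D)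
    (hr : r = (1 - a1) • s + a1 • T s) (hs : s = (1 - a2) • q + a2 • T q) :
    ‖(1 - a0) • r + a0 • T r - u‖ ≤ (1 - (1 - δ) * (a1 * a2)) * ‖q - u‖ := by
  obtain ⟨hδ0, hδ1⟩ := hδ
  obtain ⟨h00, h01⟩ := ha0
  obtain ⟨h10, h11⟩ := ha1
  obtain ⟨h20, h21⟩ := ha2
  have hsq : ‖s - u‖ ≤ (1 - (1 - δ) * a2) * ‖q - u‖ := by
    rw [hs]; exact norm_one_sub_smul_add_smul_sub_le (hTu q hqD) ⟨h20, h21⟩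
  have hrs : ‖r - u‖ ≤ (1 - (1 - δ) * a1) * ‖s - u‖ := by
    rw [hr]; exact norm_one_sub_smul_add_smul_sub_le (hTu s hsD) ⟨h10, h11⟩
  have hr' : ‖(1 - a0) • r + a0 • T r - u‖ ≤ (1 - (1 - δ) * a0) * ‖r - u‖ :=
    norm_one_sub_smul_add_smul_sub_le (hTu r hrD) ⟨h00, h01⟩
  have hfactor : (1 - (1 - δ) * a1) * (1 - (1 - δ) * a2) ≤ 1 - (1 - δ) * (a1 * a2) := by
    nlinarith [mul_nonneg (mul_nonneg h10 h20) (mul_nonneg hδ0 (sub_nonneg.2 hδ1)),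
      mul_nonneg h10 (sub_nonneg.2 h21), mul_nonneg (sub_nonneg.2 hδ1) (sub_nonneg.2 h11)]
  calc ‖(1 - a0) • r + a0 • T r - u‖ ≤ (1 - (1 - δ) * a0) * ‖r - u‖ := hr'
    _ ≤ ‖r - u‖ := mul_le_of_le_one_left (norm_nonneg _) (by nlinarith)
    _ ≤ (1 - (1 - δ) * a1) * ((1 - (1 - δ) * a2) * ‖q - u‖) :=
        hrs.trans (mul_le_mul_of_nonneg_left hsq (by nlinarith))
    _ ≤ (1 - (1 - δ) * (a1 * a2)) * ‖q - u‖ := by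
        rw [← mul_assoc]; exact mul_le_mul_of_nonneg_right hfactor (norm_nonneg _)

end MannStep

theorem picardS_to_SP_equivalence_general {E : Type*} [NormedAddCommGroup E] [NormedSpace ℝ E]
    (D : Set E)
    (T : E → E)
    (δ L : ℝ) (hδ : δ ∈ Set.Ioo (0 : ℝ) 1)
    (hT : ∀ x ∈ D, ∀ y ∈ D, ‖T x - T y‖ ≤ δ * ‖x - y‖ + L * ‖y - T y‖)
    (u : E) (huD : u ∈ D) (hu : T u = u)
    (a0 a1 a2 : ℕ → ℝ)
    (ha0 : ∀ n, a0 n ∈ Set.Icc (0 : ℝ) 1) (ha1 : ∀ n, a1 n ∈ Set.Icc (0 : ℝ) 1)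
    (ha2 : ∀ n, a2 n ∈ Set.Icc (0 : ℝ) 1)
    (hdiv : Filter.Tendsto (fun N => ∑ k ∈ Finset.range N, a1 k * a2 k) Filter.atTop Filter.atTop)
    (x y : ℕ → E)
    (q r s : ℕ → E) (hqD : ∀ n, q n ∈ D) (hrD : ∀ n, r n ∈ D) (hsD : ∀ n, s n ∈ D)
    (hq : ∀ n, q (n + 1) = (1 - a0 n) • r n + a0 n • T (r n))
    (hr : ∀ n, r n = (1 - a1 n) • s n + a1 n • T (s n))
    (hs : ∀ n, s n = (1 - a2 n) • q n + a2 n • T (q n)) :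
    Filter.Tendsto q Filter.atTop (nhds u) := by
  have hTu : ∀ v ∈ D, ‖T v - u‖ ≤ δ * ‖v - u‖ := fun v hv =>
    norm_apply_sub_fixedPoint_le hT huD hu hv
  have hstep : ∀ n, ‖q (n + 1) - u‖ ≤ (1 - (1 - δ) * (a1 n * a2 n)) * ‖q n - u‖ := fun n => by
    rw [hq n]
    exact norm_spStep_sub_le (Set.Ioo_subset_Icc_self hδ) hTu (ha0 n) (ha1 n) (ha2 n)
      (hqD n) (hrD n) (hsD n) (hr n) (hs n)
  have hsum : Tendsto (fun N => ∑ k ∈ range N, (1 - δ) * (a1 k * a2 k)) atTop atTop := by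
    simpa only [← mul_sum] using hdiv.const_mul_atTop (sub_pos.2 hδ.2)
  exact tendsto_iff_norm_sub_tendsto_zero.2
    (tendsto_zero_of_le_one_sub_mul (fun _ => norm_nonneg _) hstep hsum)

theorem picardS_to_SP_equivalence {E : Type*} [NormedAddCommGroup E] [NormedSpace ℝ E]
    (D : Set E) (hDne : D.Nonempty) (hDcl : IsClosed D) (hDconv : Convex ℝ D)
    (T : E → E) (hTD : Set.MapsTo T D D)
    (δ L : ℝ) (hδ : δ ∈ Set.Ioo (0 : ℝ) 1) (hL : 0 ≤ L)
    (hT : ∀ x ∈ D, ∀ y ∈ D, ‖T x - T y‖ ≤ δ * ‖x - y‖ + L * ‖y - T y‖)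
    (u : E) (huD : u ∈ D) (hu : T u = u)
    (a0 a1 a2 : ℕ → ℝ)
    (ha0 : ∀ n, a0 n ∈ Set.Icc (0 : ℝ) 1) (ha1 : ∀ n, a1 n ∈ Set.Icc (0 : ℝ) 1)
    (ha2 : ∀ n, a2 n ∈ Set.Icc (0 : ℝ) 1)
    (hdiv : Filter.Tendsto (fun N => ∑ k ∈ Finset.range N, a1 k * a2 k) Filter.atTop Filter.atTop)
    (x y z : ℕ → E) (hxD : ∀ n, x n ∈ D) (hyD : ∀ n, y n ∈ D) (hzD : ∀ n, z n ∈ D)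
    (hx : ∀ n, x (n + 1) = T (y n))
    (hy : ∀ n, y n = (1 - a1 n) • T (x n) + a1 n • T (z n))
    (hz : ∀ n, z n = (1 - a2 n) • x n + a2 n • T (x n))
    (q r s : ℕ → E) (hqD : ∀ n, q n ∈ D) (hrD : ∀ n, r n ∈ D) (hsD : ∀ n, s n ∈ D)
    (hq : ∀ n, q (n + 1) = (1 - a0 n) • r n + a0 n • T (r n))
    (hr : ∀ n, r n = (1 - a1 n) • s n + a1 n • T (s n))
    (hs : ∀ n, s n = (1 - a2 n) • q n + a2 n • T (q n))
    (hxconv : Filter.Tendsto x Filter.atTop (nhds u)) :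
    Filter.Tendsto q Filter.atTop (nhds u) :=
  picardS_to_SP_equivalence_general D T δ L hδ hT u huD hu a0 a1 a2 ha0 ha1 ha2 hdiv x y q r s hqD
    hrD hsD hq hr hs
end

section
/- Under the SP iteration for a weak-contraction T with fixed point u*, assuming 0 ≤ a_n^i < 1/(1+δ) for i = 0,1,2, one has the lower bound ‖q_{n+1} − u*‖ ≥ (∏_{k=0}^{n} [1 − a_k⁰(1+δ)][1 − a_k¹(1+δ)][1 − a_k²(1+δ)]) ‖q_0 − u*‖. -/
theorem SP_lower_bound {E : Type*} [NormedAddCommGroup E] [NormedSpace ℝ E]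
    (D : Set E) (hDne : D.Nonempty) (hDcl : IsClosed D) (hDconv : Convex ℝ D)
    (T : E → E) (hTD : Set.MapsTo T D D)
    (δ L : ℝ) (hδ : δ ∈ Set.Ioo (0 : ℝ) 1) (hL : 0 ≤ L)
    (hT : ∀ x ∈ D, ∀ y ∈ D, ‖T x - T y‖ ≤ δ * ‖x - y‖ + L * ‖y - T y‖)
    (u : E) (huD : u ∈ D) (hu : T u = u)
    (a0 a1 a2 : ℕ → ℝ)
    (ha0 : ∀ n, a0 n ∈ Set.Ico (0 : ℝ) (1 / (1 + δ)))
    (ha1 : ∀ n, a1 n ∈ Set.Ico (0 : ℝ) (1 / (1 + δ)))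
    (ha2 : ∀ n, a2 n ∈ Set.Ico (0 : ℝ) (1 / (1 + δ)))
    (q r s : ℕ → E) (hqD : ∀ n, q n ∈ D) (hrD : ∀ n, r n ∈ D) (hsD : ∀ n, s n ∈ D)
    (hq : ∀ n, q (n + 1) = (1 - a0 n) • r n + a0 n • T (r n))
    (hr : ∀ n, r n = (1 - a1 n) • s n + a1 n • T (s n))
    (hs : ∀ n, s n = (1 - a2 n) • q n + a2 n • T (q n)) :
    ∀ n, (∏ k ∈ Finset.range (n + 1),
        (1 - a0 k * (1 + δ)) * (1 - a1 k * (1 + δ)) * (1 - a2 k * (1 + δ))) * ‖q 0 - u‖ ≤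
      ‖q (n + 1) - u‖ := by
  obtain ⟨hδ0, hδ1⟩ := hδ
  have h1δ : (0:ℝ) < 1 + δ := by linarith
  have hTu : ∀ x ∈ D, ‖T x - u‖ ≤ δ * ‖x - u‖ := by
    intro x hx
    have := hT x hx u huD
    simpa [hu, sub_self] using this
  have step : ∀ (a : ℝ), a ∈ Set.Ico (0:ℝ) (1 / (1 + δ)) → ∀ x ∈ D,
      (1 - a * (1 + δ)) * ‖x - u‖ ≤ ‖(1 - a) • x + a • T x - u‖ := by
    intro a ha x hx
    have ha1 : a * (1 + δ) < 1 := by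
      have := (lt_div_iff₀ h1δ).mp ha.2
      linarith
    have ha0' : 0 ≤ a := ha.1
    have halt1 : a ≤ 1 := by nlinarith
    have key : (1 - a) • x + a • T x - u = (1 - a) • (x - u) + a • (T x - u) := by
      module
    rw [key]
    have h2 : ‖(1 - a) • (x - u)‖ - ‖a • (T x - u)‖ ≤
        ‖(1 - a) • (x - u) + a • (T x - u)‖ := by
      have h := norm_add_le ((1 - a) • (x - u) + a • (T x - u)) (-(a • (T x - u)))
      simp only [add_neg_cancel_right, norm_neg] at h
      linarith
    rw [norm_smul, norm_smul, Real.norm_eq_abs, Real.norm_eq_abs,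
      abs_of_nonneg ha0', abs_of_nonneg (by linarith : (0:ℝ) ≤ 1 - a)] at h2
    have h3 := hTu x hx
    nlinarith [norm_nonneg (x - u)]
  have fac_pos : ∀ (a : ℝ), a ∈ Set.Ico (0:ℝ) (1 / (1 + δ)) → 0 < 1 - a * (1 + δ) := by
    intro a ha
    have := (lt_div_iff₀ h1δ).mp ha.2
    linarith
  have chain : ∀ n, (1 - a0 n * (1 + δ)) * (1 - a1 n * (1 + δ)) * (1 - a2 n * (1 + δ)) *
      ‖q n - u‖ ≤ ‖q (n + 1) - u‖ := by
    intro n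
    have c2 : (1 - a2 n * (1 + δ)) * ‖q n - u‖ ≤ ‖s n - u‖ := by
      rw [hs n]; exact step (a2 n) (ha2 n) (q n) (hqD n)
    have c1 : (1 - a1 n * (1 + δ)) * ‖s n - u‖ ≤ ‖r n - u‖ := by
      rw [hr n]; exact step (a1 n) (ha1 n) (s n) (hsD n)
    have c0 : (1 - a0 n * (1 + δ)) * ‖r n - u‖ ≤ ‖q (n + 1) - u‖ := by
      rw [hq n]; exact step (a0 n) (ha0 n) (r n) (hrD n)
    have p0 := fac_pos _ (ha0 n)
    have p1 := fac_pos _ (ha1 n)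
    have d1 : (1 - a1 n * (1 + δ)) * ((1 - a2 n * (1 + δ)) * ‖q n - u‖) ≤ ‖r n - u‖ :=
      le_trans (mul_le_mul_of_nonneg_left c2 p1.le) c1
    have d0 : (1 - a0 n * (1 + δ)) * ((1 - a1 n * (1 + δ)) * ((1 - a2 n * (1 + δ)) *
        ‖q n - u‖)) ≤ ‖q (n + 1) - u‖ :=
      le_trans (mul_le_mul_of_nonneg_left d1 p0.le) c0
    calc (1 - a0 n * (1 + δ)) * (1 - a1 n * (1 + δ)) * (1 - a2 n * (1 + δ)) * ‖q n - u‖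
        = (1 - a0 n * (1 + δ)) * ((1 - a1 n * (1 + δ)) * ((1 - a2 n * (1 + δ)) *
          ‖q n - u‖)) := by ring
      _ ≤ ‖q (n + 1) - u‖ := d0
  intro n
  induction n with
  | zero => simpa using chain 0
  | succ n ih =>
    rw [Finset.prod_range_succ]
    have ppos : 0 < ∏ k ∈ Finset.range (n + 1),
        (1 - a0 k * (1 + δ)) * (1 - a1 k * (1 + δ)) * (1 - a2 k * (1 + δ)) := by
      apply Finset.prod_pos
      intro i _
      exact mul_pos (mul_pos (fac_pos _ (ha0 i)) (fac_pos _ (ha1 i))) (fac_pos _ (ha2 i))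
    have fpos := mul_pos (mul_pos (fac_pos _ (ha0 (n+1))) (fac_pos _ (ha1 (n+1))))
      (fac_pos _ (ha2 (n+1)))
    calc (∏ k ∈ Finset.range (n + 1),
            (1 - a0 k * (1 + δ)) * (1 - a1 k * (1 + δ)) * (1 - a2 k * (1 + δ))) *
          ((1 - a0 (n+1) * (1 + δ)) * (1 - a1 (n+1) * (1 + δ)) * (1 - a2 (n+1) * (1 + δ))) *
          ‖q 0 - u‖
        = (1 - a0 (n+1) * (1 + δ)) * (1 - a1 (n+1) * (1 + δ)) * (1 - a2 (n+1) * (1 + δ)) *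
          ((∏ k ∈ Finset.range (n + 1),
            (1 - a0 k * (1 + δ)) * (1 - a1 k * (1 + δ)) * (1 - a2 k * (1 + δ))) *
            ‖q 0 - u‖) := by ring
      _ ≤ (1 - a0 (n+1) * (1 + δ)) * (1 - a1 (n+1) * (1 + δ)) * (1 - a2 (n+1) * (1 + δ)) *
            ‖q (n + 1) - u‖ := by
          exact mul_le_mul_of_nonneg_left ih fpos.le
      _ ≤ ‖q (n + 2) - u‖ := chain (n + 1)
end

section
/- Under the Noor iteration for a weak-contraction T with fixed point u*, assuming 0 ≤ a_n^i < 1/(1+δ) for i = 0,1,2, one has ‖ω_{n+1} − u*‖ ≥ (∏_{k=0}^{n} [1 − a_k⁰(1+δ)]) ‖ω_0 − u*‖. -/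
theorem noor_lower_bound {E : Type*} [NormedAddCommGroup E] [NormedSpace ℝ E]
    (D : Set E) (hDne : D.Nonempty) (hDcl : IsClosed D) (hDconv : Convex ℝ D)
    (T : E → E) (hTD : Set.MapsTo T D D)
    (δ L : ℝ) (hδ : δ ∈ Set.Ioo (0 : ℝ) 1) (hL : 0 ≤ L)
    (hT : ∀ x ∈ D, ∀ y ∈ D, ‖T x - T y‖ ≤ δ * ‖x - y‖ + L * ‖y - T y‖)
    (u : E) (huD : u ∈ D) (hu : T u = u)
    (a0 a1 a2 : ℕ → ℝ)
    (ha0 : ∀ n, a0 n ∈ Set.Ico (0 : ℝ) (1 / (1 + δ)))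
    (ha1 : ∀ n, a1 n ∈ Set.Ico (0 : ℝ) (1 / (1 + δ)))
    (ha2 : ∀ n, a2 n ∈ Set.Ico (0 : ℝ) (1 / (1 + δ)))
    (w v p : ℕ → E) (hwD : ∀ n, w n ∈ D) (hvD : ∀ n, v n ∈ D) (hpD : ∀ n, p n ∈ D)
    (hw : ∀ n, w (n + 1) = (1 - a0 n) • w n + a0 n • T (v n))
    (hv : ∀ n, v n = (1 - a1 n) • w n + a1 n • T (p n))
    (hp : ∀ n, p n = (1 - a2 n) • w n + a2 n • T (w n)) :
    ∀ n, (∏ k ∈ Finset.range (n + 1), (1 - a0 k * (1 + δ))) * ‖w 0 - u‖ ≤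
      ‖w (n + 1) - u‖ := by
  obtain ⟨hδ0, hδ1⟩ := hδ
  have h1δ : (1 : ℝ) < 1 + δ := by linarith
  -- For x ∈ D, ‖T x - u‖ ≤ δ * ‖x - u‖
  have hTu : ∀ x ∈ D, ‖T x - u‖ ≤ δ * ‖x - u‖ := by
    intro x hx
    have := hT x hx u huD
    simpa [hu, sub_self] using this
  have hrange : ∀ (a : ℕ → ℝ), (∀ n, a n ∈ Set.Ico (0 : ℝ) (1 / (1 + δ))) →
      ∀ n, 0 ≤ a n ∧ a n * (1 + δ) < 1 := by
    intro a ha n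
    have h1 := (ha n).1
    have h2 := (ha n).2
    refine ⟨h1, ?_⟩
    calc a n * (1 + δ) < (1 / (1 + δ)) * (1 + δ) := by
          apply mul_lt_mul_of_pos_right h2; linarith
      _ = 1 := by field_simp
  -- convexity-style bound
  have hmix : ∀ (a : ℝ) (x y : E), 0 ≤ a → a * (1 + δ) < 1 →
      ‖(1 - a) • x + a • y‖ ≤ (1 - a) * ‖x‖ + a * ‖y‖ := by
    intro a x y ha0' ha1'
    have ha' : a ≤ 1 := by nlinarith
    calc ‖(1 - a) • x + a • y‖ ≤ ‖(1 - a) • x‖ + ‖a • y‖ := norm_add_le _ _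
      _ = (1 - a) * ‖x‖ + a * ‖y‖ := by
          rw [norm_smul, norm_smul, Real.norm_eq_abs, Real.norm_eq_abs,
            abs_of_nonneg (by linarith), abs_of_nonneg ha0']
  have key : ∀ n, (1 - a0 n * (1 + δ)) * ‖w n - u‖ ≤ ‖w (n + 1) - u‖ := by
    intro n
    obtain ⟨h00, h01⟩ := hrange a0 ha0 n
    obtain ⟨h10, h11⟩ := hrange a1 ha1 n
    obtain ⟨h20, h21⟩ := hrange a2 ha2 n
    have hwnorm : (0:ℝ) ≤ ‖w n - u‖ := norm_nonneg _
    have hpb : ‖p n - u‖ ≤ ‖w n - u‖ := by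
      have h1 : p n - u = (1 - a2 n) • (w n - u) + a2 n • (T (w n) - u) := by
        rw [hp n]; module
      rw [h1]
      calc ‖(1 - a2 n) • (w n - u) + a2 n • (T (w n) - u)‖
          ≤ (1 - a2 n) * ‖w n - u‖ + a2 n * ‖T (w n) - u‖ := hmix _ _ _ h20 h21
        _ ≤ (1 - a2 n) * ‖w n - u‖ + a2 n * (δ * ‖w n - u‖) := by
            have h := hTu (w n) (hwD n)
            nlinarith [mul_le_mul_of_nonneg_left h h20]
        _ ≤ ‖w n - u‖ := by nlinarith [mul_nonneg h20 hwnorm]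
    have hvb : ‖v n - u‖ ≤ ‖w n - u‖ := by
      have h1 : v n - u = (1 - a1 n) • (w n - u) + a1 n • (T (p n) - u) := by
        rw [hv n]; module
      rw [h1]
      calc ‖(1 - a1 n) • (w n - u) + a1 n • (T (p n) - u)‖
          ≤ (1 - a1 n) * ‖w n - u‖ + a1 n * ‖T (p n) - u‖ := hmix _ _ _ h10 h11
        _ ≤ (1 - a1 n) * ‖w n - u‖ + a1 n * (δ * ‖w n - u‖) := by
            have h2 := (hTu (p n) (hpD n)).trans
              (mul_le_mul_of_nonneg_left hpb hδ0.le)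
            nlinarith [mul_le_mul_of_nonneg_left h2 h10]
        _ ≤ ‖w n - u‖ := by nlinarith [mul_nonneg h10 hwnorm]
    have hTv : ‖T (v n) - u‖ ≤ δ * ‖w n - u‖ :=
      (hTu (v n) (hvD n)).trans (mul_le_mul_of_nonneg_left hvb hδ0.le)
    have h1 : w (n + 1) - u = (1 - a0 n) • (w n - u) + a0 n • (T (v n) - u) := by
      rw [hw n]; module
    set X := (1 - a0 n) • (w n - u) with hX
    set Y := a0 n • (T (v n) - u) with hY
    have h2 : ‖X‖ - ‖Y‖ ≤ ‖w (n + 1) - u‖ := by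
      rw [h1]
      have hx : ‖X‖ = ‖(X + Y) + (-Y)‖ := by congr 1; abel
      have := (norm_add_le (X + Y) (-Y))
      rw [norm_neg] at this
      linarith [hx ▸ this]
    have h3 : ‖X‖ = (1 - a0 n) * ‖w n - u‖ := by
      rw [hX, norm_smul, Real.norm_eq_abs, abs_of_nonneg (by nlinarith)]
    have h4 : ‖Y‖ ≤ a0 n * (δ * ‖w n - u‖) := by
      rw [hY, norm_smul, Real.norm_eq_abs, abs_of_nonneg h00]
      nlinarith [mul_le_mul_of_nonneg_left hTv h00]
    nlinarith
  have hfac : ∀ k, 0 < 1 - a0 k * (1 + δ) := by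
    intro k
    have := (hrange a0 ha0 k).2
    linarith
  have hprodnn : ∀ n, 0 ≤ ∏ k ∈ Finset.range n, (1 - a0 k * (1 + δ)) := by
    intro n
    exact Finset.prod_nonneg fun k _ => (hfac k).le
  intro n
  induction n with
  | zero => simpa using key 0
  | succ m ih =>
      rw [Finset.prod_range_succ]
      calc (∏ k ∈ Finset.range (m + 1), (1 - a0 k * (1 + δ))) * (1 - a0 (m+1) * (1 + δ)) * ‖w 0 - u‖
          = (1 - a0 (m+1) * (1 + δ)) * ((∏ k ∈ Finset.range (m + 1), (1 - a0 k * (1 + δ))) * ‖w 0 - u‖) := by ring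
        _ ≤ (1 - a0 (m+1) * (1 + δ)) * ‖w (m+1) - u‖ :=
            mul_le_mul_of_nonneg_left ih (hfac (m+1)).le
        _ ≤ ‖w (m+1+1) - u‖ := key (m+1)
end

section
/- Let T : D → D be a weak-contraction with fixed point u* and suppose a_n^i ∈ [0, 1/(1+δ)) with a_n^i → 0 for i ∈ {0,1,2}, and the initial points coincide: x_0 = q_0 ≠ u*. Then the Picard-S sequence {x_n} converges faster than the SP sequence {q_n} in the sense that ‖x_n − u*‖ / ‖q_n − u*‖ → 0 as n → ∞. -/
theorem picardS_faster_than_SP {E : Type*} [NormedAddCommGroup E] [NormedSpace ℝ E]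
    (D : Set E) (hDne : D.Nonempty) (hDcl : IsClosed D) (hDconv : Convex ℝ D)
    (T : E → E) (hTD : Set.MapsTo T D D)
    (δ L : ℝ) (hδ : δ ∈ Set.Ioo (0 : ℝ) 1) (hL : 0 ≤ L)
    (hT : ∀ x ∈ D, ∀ y ∈ D, ‖T x - T y‖ ≤ δ * ‖x - y‖ + L * ‖y - T y‖)
    (u : E) (huD : u ∈ D) (hu : T u = u)
    (a0 a1 a2 : ℕ → ℝ)
    (ha0 : ∀ n, a0 n ∈ Set.Ico (0 : ℝ) (1 / (1 + δ)))
    (ha1 : ∀ n, a1 n ∈ Set.Ico (0 : ℝ) (1 / (1 + δ)))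
    (ha2 : ∀ n, a2 n ∈ Set.Ico (0 : ℝ) (1 / (1 + δ)))
    (ha0lim : Filter.Tendsto a0 Filter.atTop (nhds 0))
    (ha1lim : Filter.Tendsto a1 Filter.atTop (nhds 0))
    (ha2lim : Filter.Tendsto a2 Filter.atTop (nhds 0))
    (x y z : ℕ → E) (hxD : ∀ n, x n ∈ D) (hyD : ∀ n, y n ∈ D) (hzD : ∀ n, z n ∈ D)
    (hx : ∀ n, x (n + 1) = T (y n))
    (hy : ∀ n, y n = (1 - a1 n) • T (x n) + a1 n • T (z n))
    (hz : ∀ n, z n = (1 - a2 n) • x n + a2 n • T (x n))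
    (q r s : ℕ → E) (hqD : ∀ n, q n ∈ D) (hrD : ∀ n, r n ∈ D) (hsD : ∀ n, s n ∈ D)
    (hq : ∀ n, q (n + 1) = (1 - a0 n) • r n + a0 n • T (r n))
    (hr : ∀ n, r n = (1 - a1 n) • s n + a1 n • T (s n))
    (hs : ∀ n, s n = (1 - a2 n) • q n + a2 n • T (q n))
    (hinit : x 0 = q 0) (hinit' : x 0 ≠ u) (hqne : ∀ n, q n ≠ u) :
    Filter.Tendsto (fun n => ‖x n - u‖ / ‖q n - u‖) Filter.atTop (nhds 0) := by
  obtain ⟨hδ0, hδ1⟩ := hδ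
  have hδ1p : (0:ℝ) < 1 + δ := by linarith
  -- T contracts toward the fixed point
  have hTu : ∀ w ∈ D, ‖T w - u‖ ≤ δ * ‖w - u‖ := by
    intro w hw
    have h := hT w hw u huD
    rw [hu] at h
    simpa using h
  -- coefficient bounds
  have hb : ∀ t : ℝ, t ∈ Set.Ico (0:ℝ) (1/(1+δ)) → 0 ≤ t ∧ t ≤ 1 ∧ (1+δ)*t < 1 := by
    rintro t ⟨h1, h2⟩
    have h3 : t * (1+δ) < 1 := (lt_div_iff₀ hδ1p).mp h2
    exact ⟨h1, by nlinarith, by nlinarith⟩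
  -- convex-combination norm estimates
  have mix_le : ∀ (a : ℝ), 0 ≤ a → a ≤ 1 → ∀ p w : E,
      ‖(1-a)•p + a•w - u‖ ≤ (1-a)*‖p-u‖ + a*‖w-u‖ := by
    intro a ha0' ha1' p w
    have h : (1-a)•p + a•w - u = (1-a)•(p-u) + a•(w-u) := by module
    rw [h]
    refine (norm_add_le _ _).trans ?_
    rw [norm_smul, norm_smul, Real.norm_eq_abs, Real.norm_eq_abs,
      abs_of_nonneg (by linarith), abs_of_nonneg ha0']
  have mix_ge : ∀ (a : ℝ), 0 ≤ a → a ≤ 1 → ∀ p w : E,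
      (1-a)*‖p-u‖ - a*‖w-u‖ ≤ ‖(1-a)•p + a•w - u‖ := by
    intro a ha0' ha1' p w
    have h : (1-a)•p + a•w - u = (1-a)•(p-u) + a•(w-u) := by module
    rw [h]
    have h3 : ‖(1-a)•(p-u)‖ ≤ ‖(1-a)•(p-u) + a•(w-u)‖ + ‖a•(w-u)‖ := by
      simpa using norm_add_le ((1-a)•(p-u) + a•(w-u)) (-(a•(w-u)))
    rw [norm_smul, norm_smul, Real.norm_eq_abs, Real.norm_eq_abs,
      abs_of_nonneg (by linarith), abs_of_nonneg ha0'] at h3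
    linarith
  -- the product coefficient
  set c : ℕ → ℝ := fun n => (1 - (1+δ)*a0 n) * ((1 - (1+δ)*a1 n) * (1 - (1+δ)*a2 n)) with hc
  have hcpos : ∀ n, 0 < c n := by
    intro n
    obtain ⟨_, _, h0⟩ := hb _ (ha0 n)
    obtain ⟨_, _, h1⟩ := hb _ (ha1 n)
    obtain ⟨_, _, h2⟩ := hb _ (ha2 n)
    have : 0 < 1 - (1+δ)*a0 n := by linarith
    have : 0 < 1 - (1+δ)*a1 n := by linarith
    have : 0 < 1 - (1+δ)*a2 n := by linarith
    positivity
  -- c tends to 1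
  have hclim : Filter.Tendsto c Filter.atTop (nhds 1) := by
    have h0 : Filter.Tendsto (fun n => 1 - (1+δ)*a0 n) Filter.atTop (nhds (1 - (1+δ)*0)) :=
      (Filter.Tendsto.const_mul _ ha0lim).const_sub 1
    have h1 : Filter.Tendsto (fun n => 1 - (1+δ)*a1 n) Filter.atTop (nhds (1 - (1+δ)*0)) :=
      (Filter.Tendsto.const_mul _ ha1lim).const_sub 1
    have h2 : Filter.Tendsto (fun n => 1 - (1+δ)*a2 n) Filter.atTop (nhds (1 - (1+δ)*0)) :=
      (Filter.Tendsto.const_mul _ ha2lim).const_sub 1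
    have := h0.mul (h1.mul h2)
    simpa using this
  -- Picard-S step: ‖x (n+1) - u‖ ≤ δ*δ*‖x n - u‖
  have hxstep : ∀ n, ‖x (n+1) - u‖ ≤ δ * δ * ‖x n - u‖ := by
    intro n
    obtain ⟨h10, h11, _⟩ := hb _ (ha1 n)
    obtain ⟨h20, h21, _⟩ := hb _ (ha2 n)
    have hX : (0:ℝ) ≤ ‖x n - u‖ := norm_nonneg _
    have hTx := hTu _ (hxD n)
    have hTz := hTu _ (hzD n)
    have hz' : ‖z n - u‖ ≤ ‖x n - u‖ := by
      rw [hz n]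
      refine (mix_le _ h20 h21 _ _).trans ?_
      nlinarith [mul_le_mul_of_nonneg_left hTx h20, mul_nonneg h20 hX]
    have hy' : ‖y n - u‖ ≤ δ * ‖x n - u‖ := by
      rw [hy n]
      refine (mix_le _ h10 h11 _ _).trans ?_
      have hz2 : ‖T (z n) - u‖ ≤ δ * ‖x n - u‖ :=
        hTz.trans (mul_le_mul_of_nonneg_left hz' hδ0.le)
      nlinarith [mul_le_mul_of_nonneg_left hTx (by linarith : (0:ℝ) ≤ 1 - a1 n),
        mul_le_mul_of_nonneg_left hz2 h10]
    have hTy := hTu _ (hyD n)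
    rw [hx n]
    nlinarith
  -- SP step: c n * ‖q n - u‖ ≤ ‖q (n+1) - u‖
  have hqstep : ∀ n, c n * ‖q n - u‖ ≤ ‖q (n+1) - u‖ := by
    intro n
    obtain ⟨h00, h01, h0l⟩ := hb _ (ha0 n)
    obtain ⟨h10, h11, h1l⟩ := hb _ (ha1 n)
    obtain ⟨h20, h21, h2l⟩ := hb _ (ha2 n)
    have hQ : (0:ℝ) ≤ ‖q n - u‖ := norm_nonneg _
    have hTq := hTu _ (hqD n)
    have hs' : (1 - (1+δ)*a2 n) * ‖q n - u‖ ≤ ‖s n - u‖ := by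
      have := mix_ge _ h20 h21 (q n) (T (q n))
      rw [← hs n] at this
      nlinarith
    have hTs := hTu _ (hsD n)
    have hr' : (1 - (1+δ)*a1 n) * ‖s n - u‖ ≤ ‖r n - u‖ := by
      have := mix_ge _ h10 h11 (s n) (T (s n))
      rw [← hr n] at this
      nlinarith
    have hTr := hTu _ (hrD n)
    have hq' : (1 - (1+δ)*a0 n) * ‖r n - u‖ ≤ ‖q (n+1) - u‖ := by
      have := mix_ge _ h00 h01 (r n) (T (r n))
      rw [← hq n] at this
      nlinarith
    have hS : (0:ℝ) ≤ ‖s n - u‖ := norm_nonneg _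
    have hR : (0:ℝ) ≤ ‖r n - u‖ := norm_nonneg _
    have e2 : 0 ≤ 1 - (1+δ)*a2 n := by linarith
    have e1 : 0 ≤ 1 - (1+δ)*a1 n := by linarith
    have e0 : 0 ≤ 1 - (1+δ)*a0 n := by linarith
    have t1 : (1 - (1+δ)*a1 n) * ((1 - (1+δ)*a2 n) * ‖q n - u‖) ≤ ‖r n - u‖ := by
      refine le_trans ?_ hr'
      exact mul_le_mul_of_nonneg_left hs' e1
    have t2 : (1 - (1+δ)*a0 n) * ((1 - (1+δ)*a1 n) * ((1 - (1+δ)*a2 n) * ‖q n - u‖)) ≤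
        ‖q (n+1) - u‖ := by
      refine le_trans ?_ hq'
      exact mul_le_mul_of_nonneg_left t1 e0
    calc c n * ‖q n - u‖
        = (1 - (1+δ)*a0 n) * ((1 - (1+δ)*a1 n) * ((1 - (1+δ)*a2 n) * ‖q n - u‖)) := by
          simp only [hc]; ring
      _ ≤ ‖q (n+1) - u‖ := t2
  have hQpos : ∀ n, 0 < ‖q n - u‖ := fun n => norm_pos_iff.mpr (sub_ne_zero.mpr (hqne n))
  -- eventually δ ≤ c n
  obtain ⟨N, hN⟩ := Filter.eventually_atTop.mp (hclim.eventually (eventually_gt_nhds hδ1))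
  -- ratio step
  have hrstep : ∀ n, N ≤ n →
      ‖x (n+1) - u‖ / ‖q (n+1) - u‖ ≤ δ * (‖x n - u‖ / ‖q n - u‖) := by
    intro n hn
    have hcδ : δ < c n := hN n hn
    have hX : (0:ℝ) ≤ ‖x n - u‖ := norm_nonneg _
    have h1 : ‖x (n+1) - u‖ ≤ δ * c n * ‖x n - u‖ := by
      refine (hxstep n).trans ?_
      have := mul_le_mul_of_nonneg_right hcδ.le (mul_nonneg hδ0.le hX)
      nlinarith [this]
    have h2 : c n * ‖q n - u‖ ≤ ‖q (n+1) - u‖ := hqstep n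
    have hcQpos : 0 < c n * ‖q n - u‖ := mul_pos (hcpos n) (hQpos n)
    calc ‖x (n+1) - u‖ / ‖q (n+1) - u‖
        ≤ (δ * c n * ‖x n - u‖) / (c n * ‖q n - u‖) :=
          div_le_div₀ (mul_nonneg (mul_nonneg hδ0.le (hcpos n).le) (norm_nonneg _))
            h1 hcQpos h2
      _ = δ * (‖x n - u‖ / ‖q n - u‖) := by
          rw [show δ * c n * ‖x n - u‖ = δ * (c n * ‖x n - u‖) by ring, mul_div_assoc,
            mul_div_mul_left _ _ (hcpos n).ne']
  -- geometric bound after N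
  have hgeo : ∀ m, ‖x (N+m) - u‖ / ‖q (N+m) - u‖ ≤ δ^m * (‖x N - u‖ / ‖q N - u‖) := by
    intro m
    induction m with
    | zero => simp
    | succ k ih =>
      have := hrstep (N+k) (Nat.le_add_right _ _)
      calc ‖x (N+(k+1)) - u‖ / ‖q (N+(k+1)) - u‖
          = ‖x ((N+k)+1) - u‖ / ‖q ((N+k)+1) - u‖ := by ring_nf
        _ ≤ δ * (‖x (N+k) - u‖ / ‖q (N+k) - u‖) := this
        _ ≤ δ * (δ^k * (‖x N - u‖ / ‖q N - u‖)) := by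
            exact mul_le_mul_of_nonneg_left ih (le_of_lt hδ0)
        _ = δ^(k+1) * (‖x N - u‖ / ‖q N - u‖) := by ring
  -- squeeze
  have hlim1 : Filter.Tendsto (fun m => δ^m * (‖x N - u‖ / ‖q N - u‖)) Filter.atTop (nhds 0) := by
    have := (tendsto_pow_atTop_nhds_zero_of_lt_one (le_of_lt hδ0) hδ1).mul_const
      (‖x N - u‖ / ‖q N - u‖)
    simpa only [zero_mul] using this
  have hshift : Filter.Tendsto (fun m => ‖x (N+m) - u‖ / ‖q (N+m) - u‖) Filter.atTop (nhds 0) := by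
    exact squeeze_zero (fun m => div_nonneg (norm_nonneg _) (norm_nonneg _)) hgeo hlim1
  have : Filter.Tendsto (fun m => ‖x (m+N) - u‖ / ‖q (m+N) - u‖) Filter.atTop (nhds 0) := by
    have heq : (fun m => ‖x (m+N) - u‖ / ‖q (m+N) - u‖)
        = fun m => ‖x (N+m) - u‖ / ‖q (N+m) - u‖ := by
      funext m; rw [Nat.add_comm]
    rw [heq]; exact hshift
  exact (Filter.tendsto_add_atTop_iff_nat N).mp this
end

section
/- Let T : D → D be a weak-contraction with fixed point u*, and suppose a_n^i ∈ [0, 1/(1+δ)) with a_n^i → 0 for i ∈ {0,1,2}, with common initial point x_0 = ω_0 ≠ u*. Then the Picard-S sequence {x_n} converges faster than the Noor sequence {ω_n}: ‖x_n − u*‖ / ‖ω_n − u*‖ → 0 as n → ∞. -/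
lemma comb_upper {E : Type*} [NormedAddCommGroup E] [NormedSpace ℝ E]
    (a : ℝ) (ha : 0 ≤ a) (ha1 : a ≤ 1) (P Q u : E) (c1 c2 : ℝ)
    (h1 : ‖P - u‖ ≤ c1) (h2 : ‖Q - u‖ ≤ c2) :
    ‖(1 - a) • P + a • Q - u‖ ≤ (1 - a) * c1 + a * c2 := by
  have key : (1 - a) • P + a • Q - u = (1 - a) • (P - u) + a • (Q - u) := by
    module
  rw [key]
  calc ‖(1 - a) • (P - u) + a • (Q - u)‖
      ≤ ‖(1 - a) • (P - u)‖ + ‖a • (Q - u)‖ := norm_add_le _ _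
    _ = (1 - a) * ‖P - u‖ + a * ‖Q - u‖ := by
        rw [norm_smul, norm_smul, Real.norm_of_nonneg (by linarith),
          Real.norm_of_nonneg ha]
    _ ≤ (1 - a) * c1 + a * c2 := by gcongr <;> linarith

lemma comb_lower {E : Type*} [NormedAddCommGroup E] [NormedSpace ℝ E]
    (a : ℝ) (ha : 0 ≤ a) (ha1 : a ≤ 1) (P Q u : E) (c2 : ℝ)
    (h2 : ‖Q - u‖ ≤ c2) :
    (1 - a) * ‖P - u‖ - a * c2 ≤ ‖(1 - a) • P + a • Q - u‖ := by
  have key : (1 - a) • (P - u) = ((1 - a) • P + a • Q - u) + (-(a • (Q - u))) := by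
    module
  have h3 : ‖(1 - a) • (P - u)‖ ≤ ‖(1 - a) • P + a • Q - u‖ + ‖a • (Q - u)‖ := by
    rw [key]
    simpa using norm_add_le ((1 - a) • P + a • Q - u) (-(a • (Q - u)))
  rw [norm_smul, Real.norm_of_nonneg (by linarith)] at h3
  rw [norm_smul, Real.norm_of_nonneg ha] at h3
  nlinarith [norm_nonneg (Q - u)]

theorem picardS_faster_than_noor {E : Type*} [NormedAddCommGroup E] [NormedSpace ℝ E]
    (D : Set E) (hDne : D.Nonempty) (hDcl : IsClosed D) (hDconv : Convex ℝ D)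
    (T : E → E) (hTD : Set.MapsTo T D D)
    (δ L : ℝ) (hδ : δ ∈ Set.Ioo (0 : ℝ) 1) (hL : 0 ≤ L)
    (hT : ∀ x ∈ D, ∀ y ∈ D, ‖T x - T y‖ ≤ δ * ‖x - y‖ + L * ‖y - T y‖)
    (u : E) (huD : u ∈ D) (hu : T u = u)
    (a0 a1 a2 : ℕ → ℝ)
    (ha0 : ∀ n, a0 n ∈ Set.Ico (0 : ℝ) (1 / (1 + δ)))
    (ha1 : ∀ n, a1 n ∈ Set.Ico (0 : ℝ) (1 / (1 + δ)))
    (ha2 : ∀ n, a2 n ∈ Set.Ico (0 : ℝ) (1 / (1 + δ)))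
    (ha0lim : Filter.Tendsto a0 Filter.atTop (nhds 0))
    (ha1lim : Filter.Tendsto a1 Filter.atTop (nhds 0))
    (ha2lim : Filter.Tendsto a2 Filter.atTop (nhds 0))
    (x y z : ℕ → E) (hxD : ∀ n, x n ∈ D) (hyD : ∀ n, y n ∈ D) (hzD : ∀ n, z n ∈ D)
    (hx : ∀ n, x (n + 1) = T (y n))
    (hy : ∀ n, y n = (1 - a1 n) • T (x n) + a1 n • T (z n))
    (hz : ∀ n, z n = (1 - a2 n) • x n + a2 n • T (x n))
    (w v p : ℕ → E) (hwD : ∀ n, w n ∈ D) (hvD : ∀ n, v n ∈ D) (hpD : ∀ n, p n ∈ D)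
    (hw : ∀ n, w (n + 1) = (1 - a0 n) • w n + a0 n • T (v n))
    (hv : ∀ n, v n = (1 - a1 n) • w n + a1 n • T (p n))
    (hp : ∀ n, p n = (1 - a2 n) • w n + a2 n • T (w n))
    (hinit : x 0 = w 0) (hinit' : x 0 ≠ u) (hwne : ∀ n, w n ≠ u) :
    Filter.Tendsto (fun n => ‖x n - u‖ / ‖w n - u‖) Filter.atTop (nhds 0) := by
  obtain ⟨hδ0, hδ1⟩ := hδ
  have h1δ : (0:ℝ) < 1 + δ := by linarith
  have hfrac1 : 1 / (1 + δ) ≤ 1 := by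
    rw [div_le_one h1δ]; linarith
  have hTu : ∀ q ∈ D, ‖T q - u‖ ≤ δ * ‖q - u‖ := by
    intro q hq
    have := hT q hq u huD
    rw [hu] at this
    simpa using this
  have ha0b : ∀ n, 0 ≤ a0 n ∧ a0 n ≤ 1 := fun n =>
    ⟨(ha0 n).1, le_trans (le_of_lt (ha0 n).2) hfrac1⟩
  have ha1b : ∀ n, 0 ≤ a1 n ∧ a1 n ≤ 1 := fun n =>
    ⟨(ha1 n).1, le_trans (le_of_lt (ha1 n).2) hfrac1⟩
  have ha2b : ∀ n, 0 ≤ a2 n ∧ a2 n ≤ 1 := fun n =>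
    ⟨(ha2 n).1, le_trans (le_of_lt (ha2 n).2) hfrac1⟩
  set A : ℕ → ℝ := fun n => ‖x n - u‖ with hA
  set B : ℕ → ℝ := fun n => ‖w n - u‖ with hB
  have hBpos : ∀ n, 0 < B n := fun n =>
    norm_pos_iff.2 (sub_ne_zero.2 (hwne n))
  have hAnn : ∀ n, 0 ≤ A n := fun n => norm_nonneg _
  -- Picard-S upper bounds
  have hzb : ∀ n, ‖z n - u‖ ≤ A n := by
    intro n
    rw [hz n]
    have h2 : ‖T (x n) - u‖ ≤ δ * A n := hTu _ (hxD n)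
    have hcomb := comb_upper (a2 n) (ha2b n).1 (ha2b n).2 (x n) (T (x n)) u
      (A n) (δ * A n) le_rfl h2
    have hprod : a2 n * (δ * A n) ≤ a2 n * A n :=
      mul_le_mul_of_nonneg_left (by nlinarith [hAnn n]) (ha2b n).1
    linarith
  have hyb : ∀ n, ‖y n - u‖ ≤ δ * A n := by
    intro n
    rw [hy n]
    have h1 : ‖T (x n) - u‖ ≤ δ * A n := hTu _ (hxD n)
    have h2 : ‖T (z n) - u‖ ≤ δ * A n :=
      le_trans (hTu _ (hzD n)) (by nlinarith [hzb n])
    have := comb_upper (a1 n) (ha1b n).1 (ha1b n).2 (T (x n)) (T (z n)) u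
      (δ * A n) (δ * A n) h1 h2
    nlinarith [(ha1b n).1]
  have hAstep : ∀ n, A (n + 1) ≤ δ ^ 2 * A n := by
    intro n
    have hAe : A (n + 1) = ‖T (y n) - u‖ := by rw [hA]; simp [hx n]
    rw [hAe]
    calc ‖T (y n) - u‖ ≤ δ * ‖y n - u‖ := hTu _ (hyD n)
      _ ≤ δ * (δ * A n) := by nlinarith [hyb n]
      _ = δ ^ 2 * A n := by ring
  -- Noor bounds
  have hpb : ∀ n, ‖p n - u‖ ≤ B n := by
    intro n
    rw [hp n]
    have h2 : ‖T (w n) - u‖ ≤ δ * B n := hTu _ (hwD n)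
    have hcomb := comb_upper (a2 n) (ha2b n).1 (ha2b n).2 (w n) (T (w n)) u
      (B n) (δ * B n) le_rfl h2
    have hprod : a2 n * (δ * B n) ≤ a2 n * B n :=
      mul_le_mul_of_nonneg_left (by nlinarith [(hBpos n).le]) (ha2b n).1
    linarith
  have hvb : ∀ n, ‖v n - u‖ ≤ B n := by
    intro n
    rw [hv n]
    have h2 : ‖T (p n) - u‖ ≤ δ * B n :=
      le_trans (hTu _ (hpD n)) (by nlinarith [hpb n])
    have hcomb := comb_upper (a1 n) (ha1b n).1 (ha1b n).2 (w n) (T (p n)) u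
      (B n) (δ * B n) le_rfl h2
    have hprod : a1 n * (δ * B n) ≤ a1 n * B n :=
      mul_le_mul_of_nonneg_left (by nlinarith [(hBpos n).le]) (ha1b n).1
    linarith
  have hBstep : ∀ n, (1 - (1 + δ) * a0 n) * B n ≤ B (n + 1) := by
    intro n
    have h2 : ‖T (v n) - u‖ ≤ δ * B n :=
      le_trans (hTu _ (hvD n)) (by nlinarith [hvb n])
    have hcomb := comb_lower (a0 n) (ha0b n).1 (ha0b n).2 (w n) (T (v n)) u
      (δ * B n) h2
    rw [← hw n] at hcomb
    have hBn1 : B (n + 1) = ‖w (n + 1) - u‖ := rfl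
    nlinarith
  -- choose κ
  set κ : ℝ := (1 + δ ^ 2) / 2 with hκ
  have hκ0 : 0 < κ := by positivity
  have hκ1 : κ < 1 := by nlinarith
  have hδκ : δ ^ 2 < κ := by nlinarith
  have hrnn : ∀ n, 0 ≤ A n / B n := fun n =>
    div_nonneg (hAnn n) (hBpos n).le
  have hfr1 : δ ^ 2 / κ < 1 := (div_lt_one hκ0).2 hδκ
  have hεpos : 0 < (1 - δ ^ 2 / κ) / (1 + δ) := div_pos (by linarith) h1δ
  have hev : ∀ᶠ n in Filter.atTop, a0 n < (1 - δ ^ 2 / κ) / (1 + δ) := by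
    have := ha0lim.eventually (eventually_lt_nhds hεpos)
    simpa using this
  obtain ⟨N, hN⟩ := Filter.eventually_atTop.1 hev
  have hstep : ∀ n, N ≤ n → A (n + 1) / B (n + 1) ≤ κ * (A n / B n) := by
    intro n hn
    have ha := hN n hn
    have hden : δ ^ 2 / κ ≤ 1 - (1 + δ) * a0 n := by
      have hlt : (1 + δ) * a0 n < 1 - δ ^ 2 / κ := by
        have := (mul_lt_mul_iff_right₀ h1δ).2 ha
        rwa [mul_div_cancel₀ _ (ne_of_gt h1δ)] at this
      linarith
    have hdenpos : 0 < 1 - (1 + δ) * a0 n := lt_of_lt_of_le (by positivity) hden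
    have hB1 : 0 < B (n + 1) := hBpos (n + 1)
    have hBne : B n ≠ 0 := (hBpos n).ne'
    rw [div_le_iff₀ hB1]
    have hκc : δ ^ 2 ≤ (1 - (1 + δ) * a0 n) * κ := (div_le_iff₀ hκ0).1 hden
    calc A (n + 1) ≤ δ ^ 2 * A n := hAstep n
      _ ≤ ((1 - (1 + δ) * a0 n) * κ) * A n :=
          mul_le_mul_of_nonneg_right hκc (hAnn n)
      _ = κ * (A n / B n) * ((1 - (1 + δ) * a0 n) * B n) := by
          field_simp
      _ ≤ κ * (A n / B n) * B (n + 1) :=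
          mul_le_mul_of_nonneg_left (hBstep n) (mul_nonneg hκ0.le (hrnn n))
  have hgeo : ∀ k, A (N + k) / B (N + k) ≤ (A N / B N) * κ ^ k := by
    intro k
    induction k with
    | zero => simp
    | succ k ih =>
      calc A (N + (k + 1)) / B (N + (k + 1))
          ≤ κ * (A (N + k) / B (N + k)) := hstep (N + k) (Nat.le_add_right N k)
        _ ≤ κ * ((A N / B N) * κ ^ k) := mul_le_mul_of_nonneg_left ih hκ0.le
        _ = (A N / B N) * κ ^ (k + 1) := by ring
  have htail : Filter.Tendsto (fun k => A (N + k) / B (N + k)) Filter.atTop (nhds 0) := by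
    have hlim : Filter.Tendsto (fun k => (A N / B N) * κ ^ k) Filter.atTop (nhds 0) := by
      have := tendsto_pow_atTop_nhds_zero_of_lt_one hκ0.le hκ1
      simpa using this.const_mul (A N / B N)
    exact squeeze_zero (fun k => hrnn (N + k)) hgeo hlim
  have htail' : Filter.Tendsto (fun k => A (k + N) / B (k + N)) Filter.atTop (nhds 0) := by
    simpa [add_comm] using htail
  exact (Filter.tendsto_add_atTop_iff_nat N).1 htail'
end

section
/- Let T : D → D be a weak-contraction with fixed point u* and T̃ an approximate operator of T with ‖Tx − T̃x‖ ≤ ε for all x ∈ D. Let {x_n} be the Picard-S sequence for T and {x̃_n} the Picard-S sequence for T̃, with a_n¹, a_n² ∈ [0,1] satisfying 1/2 ≤ a_n¹ a_n² and ∑ a_n¹ a_n² = ∞. Then for each n: ‖x_{n+1} − x̃_{n+1}‖ ≤ [1 − a_n¹ a_n²(1−δ)] ‖x_n − x̃_n‖ + a_n¹ a_n²(1−δ) · [Lδ(1+δ)‖x_n − Tx_n‖ + 2L‖y_n − Ty_n‖ + 2δL‖z_n − Tz_n‖ + 5ε] / (1−δ). -/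
/-! Each of the three Picard-S substeps moves the error `‖xₙ - x̃ₙ‖` through a convex combination
and one application of `T` versus `T̃`; the weak-contraction inequality, taken with the exact
iterate in the second slot, turns every application into `δ · error + L · (residual) + ε`.
Unrolling the three substeps gives an error coefficient `δ² (1 - aₙ¹aₙ²(1 - δ))`, and the
constraint `1/2 ≤ aₙ¹aₙ²` (hence also `1/2 ≤ aₙ¹, aₙ²`) lets each remaining coefficient be
dominated by the corresponding one of the claimed bound. -/

open Set

theorem norm_apply_sub_approx_le {E : Type*} [NormedAddCommGroup E] {D : Set E} {T S : E → E}
    {δ L ε : ℝ}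
    (hT : ∀ x ∈ D, ∀ y ∈ D, ‖T x - T y‖ ≤ δ * ‖x - y‖ + L * ‖y - T y‖)
    (happrox : ∀ x ∈ D, ‖T x - S x‖ ≤ ε) {u v : E} (hu : u ∈ D) (hv : v ∈ D) :
    ‖T u - S v‖ ≤ δ * ‖u - v‖ + L * ‖u - T u‖ + ε :=
  calc ‖T u - S v‖ ≤ ‖T u - T v‖ + ‖T v - S v‖ := norm_sub_le_norm_sub_add_norm_sub _ _ _
    _ ≤ δ * ‖v - u‖ + L * ‖u - T u‖ + ε := by
        rw [norm_sub_rev (T u)]; exact add_le_add (hT v hv u hu) (happrox v hv)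
    _ = δ * ‖u - v‖ + L * ‖u - T u‖ + ε := by rw [norm_sub_rev v]

theorem norm_convexComb_sub_convexComb_le {E : Type*} [NormedAddCommGroup E] [NormedSpace ℝ E]
    {a : ℝ} (ha : a ∈ Icc (0 : ℝ) 1) (p q p' q' : E) :
    ‖((1 - a) • p + a • q) - ((1 - a) • p' + a • q')‖ ≤ (1 - a) * ‖p - p'‖ + a * ‖q - q'‖ := by
  have hcomb : ((1 - a) • p + a • q) - ((1 - a) • p' + a • q') =
      (1 - a) • (p - p') + a • (q - q') := by module
  rw [hcomb]
  refine (norm_add_le _ _).trans_eq ?_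
  rw [norm_smul, norm_smul, Real.norm_of_nonneg (sub_nonneg.2 ha.2), Real.norm_of_nonneg ha.1]

theorem picardS_error_le {δ L ε a₁ a₂ e X Y Z eTx ez eTz ey e' : ℝ}
    (hδ₀ : 0 ≤ δ) (hδ₁ : δ < 1) (hL : 0 ≤ L) (hε : 0 ≤ ε)
    (ha₁ : a₁ ∈ Icc (0 : ℝ) 1) (ha₂ : a₂ ∈ Icc (0 : ℝ) 1) (hhalf : 1 / 2 ≤ a₁ * a₂)
    (he : 0 ≤ e) (hX : 0 ≤ X) (hY : 0 ≤ Y) (hZ : 0 ≤ Z)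
    (hTx : eTx ≤ δ * e + L * X + ε) (hz : ez ≤ (1 - a₂) * e + a₂ * eTx)
    (hTz : eTz ≤ δ * ez + L * Z + ε) (hy : ey ≤ (1 - a₁) * eTx + a₁ * eTz)
    (hnext : e' ≤ δ * ey + L * Y + ε) :
    e' ≤ (1 - a₁ * a₂ * (1 - δ)) * e +
      a₁ * a₂ * (1 - δ) *
        ((L * δ * (1 + δ) * X + 2 * L * Y + 2 * δ * L * Z + 5 * ε) / (1 - δ)) := by
  obtain ⟨ha₁₀, ha₁₁⟩ := ha₁
  obtain ⟨ha₂₀, ha₂₁⟩ := ha₂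
  have hunrolled : e' ≤ δ * ((1 - a₁) * (δ * e + L * X + ε) +
      a₁ * (δ * ((1 - a₂) * e + a₂ * (δ * e + L * X + ε)) + L * Z + ε)) + L * Y + ε := by
    have h1a₁ : 0 ≤ 1 - a₁ := by linarith
    have h1a₂ : 0 ≤ 1 - a₂ := by linarith
    calc e' ≤ δ * ey + L * Y + ε := hnext
      _ ≤ δ * ((1 - a₁) * eTx + a₁ * (δ * ((1 - a₂) * e + a₂ * eTx) + L * Z + ε)) + L * Y + ε := by
          gcongr
          exact hy.trans (by gcongr; exact hTz.trans (by gcongr))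
      _ ≤ _ := by gcongr
  rw [mul_assoc (a₁ * a₂), mul_div_cancel₀ _ (by linarith : 1 - δ ≠ 0)]
  -- the gap between the two sides is the sum of the following nonnegative terms
  have heGap : 0 ≤ (1 - δ ^ 2) * (1 - a₁ * a₂ * (1 - δ)) * e := by
    have : a₁ * a₂ ≤ 1 := mul_le_one₀ ha₁₁ ha₂₀ ha₂₁
    refine mul_nonneg (mul_nonneg ?_ ?_) he <;> nlinarith
  have hXGap : 0 ≤ δ * (a₁ * a₂ - (1 - a₁)) * (L * X) :=
    mul_nonneg (mul_nonneg hδ₀ (by nlinarith)) (mul_nonneg hL hX)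
  have hYGap : 0 ≤ (2 * (a₁ * a₂) - 1) * (L * Y) :=
    mul_nonneg (by linarith) (mul_nonneg hL hY)
  have hZGap : 0 ≤ δ * L * (a₁ * (2 * a₂ - 1)) * Z :=
    mul_nonneg (mul_nonneg (mul_nonneg hδ₀ hL) (mul_nonneg ha₁₀ (by nlinarith))) hZ
  have hεGap : 0 ≤ (5 * (a₁ * a₂) - δ - δ ^ 2 * (a₁ * a₂) - 1) * ε := by
    have : δ ^ 2 * (a₁ * a₂) ≤ a₁ * a₂ :=
      mul_le_of_le_one_left (by linarith) (pow_le_one₀ hδ₀ hδ₁.le)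
    exact mul_nonneg (by linarith) hε
  linarith

theorem data_dependence_step_general {E : Type*} [NormedAddCommGroup E] [NormedSpace ℝ E]
    (D : Set E)
    (T S : E → E)
    (δ L : ℝ) (hδ : δ ∈ Set.Ioo (0 : ℝ) 1) (hL : 0 ≤ L)
    (hT : ∀ x ∈ D, ∀ y ∈ D, ‖T x - T y‖ ≤ δ * ‖x - y‖ + L * ‖y - T y‖)
    (ε : ℝ) (hε : 0 < ε) (happrox : ∀ x ∈ D, ‖T x - S x‖ ≤ ε)
    (a1 a2 : ℕ → ℝ)
    (ha1 : ∀ n, a1 n ∈ Set.Icc (0 : ℝ) 1) (ha2 : ∀ n, a2 n ∈ Set.Icc (0 : ℝ) 1)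
    (hhalf : ∀ n, (1 : ℝ) / 2 ≤ a1 n * a2 n)
    (x y z : ℕ → E) (hxD : ∀ n, x n ∈ D) (hyD : ∀ n, y n ∈ D) (hzD : ∀ n, z n ∈ D)
    (hx : ∀ n, x (n + 1) = T (y n))
    (hy : ∀ n, y n = (1 - a1 n) • T (x n) + a1 n • T (z n))
    (hz : ∀ n, z n = (1 - a2 n) • x n + a2 n • T (x n))
    (x' y' z' : ℕ → E) (hxD' : ∀ n, x' n ∈ D) (hyD' : ∀ n, y' n ∈ D) (hzD' : ∀ n, z' n ∈ D)
    (hx' : ∀ n, x' (n + 1) = S (y' n))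
    (hy' : ∀ n, y' n = (1 - a1 n) • S (x' n) + a1 n • S (z' n))
    (hz' : ∀ n, z' n = (1 - a2 n) • x' n + a2 n • S (x' n)) :
    ∀ n, ‖x (n + 1) - x' (n + 1)‖ ≤
      (1 - a1 n * a2 n * (1 - δ)) * ‖x n - x' n‖ +
        a1 n * a2 n * (1 - δ) *
          ((L * δ * (1 + δ) * ‖x n - T (x n)‖ + 2 * L * ‖y n - T (y n)‖ +
            2 * δ * L * ‖z n - T (z n)‖ + 5 * ε) / (1 - δ)) := by
  intro n
  have hz_err : ‖z n - z' n‖ ≤ (1 - a2 n) * ‖x n - x' n‖ + a2 n * ‖T (x n) - S (x' n)‖ := by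
    rw [hz, hz']; exact norm_convexComb_sub_convexComb_le (ha2 n) _ _ _ _
  have hy_err : ‖y n - y' n‖ ≤
      (1 - a1 n) * ‖T (x n) - S (x' n)‖ + a1 n * ‖T (z n) - S (z' n)‖ := by
    rw [hy, hy']; exact norm_convexComb_sub_convexComb_le (ha1 n) _ _ _ _
  have hx_err : ‖x (n + 1) - x' (n + 1)‖ ≤
      δ * ‖y n - y' n‖ + L * ‖y n - T (y n)‖ + ε := by
    rw [hx, hx']; exact norm_apply_sub_approx_le hT happrox (hyD n) (hyD' n)
  exact picardS_error_le hδ.1.le hδ.2 hL hε.le (ha1 n) (ha2 n) (hhalf n)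
    (norm_nonneg _) (norm_nonneg _) (norm_nonneg _) (norm_nonneg _)
    (norm_apply_sub_approx_le hT happrox (hxD n) (hxD' n)) hz_err
    (norm_apply_sub_approx_le hT happrox (hzD n) (hzD' n)) hy_err hx_err

theorem data_dependence_step {E : Type*} [NormedAddCommGroup E] [NormedSpace ℝ E]
    (D : Set E) (hDne : D.Nonempty) (hDcl : IsClosed D) (hDconv : Convex ℝ D)
    (T S : E → E) (hTD : Set.MapsTo T D D) (hSD : Set.MapsTo S D D)
    (δ L : ℝ) (hδ : δ ∈ Set.Ioo (0 : ℝ) 1) (hL : 0 ≤ L)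
    (hT : ∀ x ∈ D, ∀ y ∈ D, ‖T x - T y‖ ≤ δ * ‖x - y‖ + L * ‖y - T y‖)
    (ε : ℝ) (hε : 0 < ε) (happrox : ∀ x ∈ D, ‖T x - S x‖ ≤ ε)
    (a1 a2 : ℕ → ℝ)
    (ha1 : ∀ n, a1 n ∈ Set.Icc (0 : ℝ) 1) (ha2 : ∀ n, a2 n ∈ Set.Icc (0 : ℝ) 1)
    (hhalf : ∀ n, (1 : ℝ) / 2 ≤ a1 n * a2 n)
    (hdiv : Filter.Tendsto (fun N => ∑ k ∈ Finset.range N, a1 k * a2 k) Filter.atTop Filter.atTop)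
    (x y z : ℕ → E) (hxD : ∀ n, x n ∈ D) (hyD : ∀ n, y n ∈ D) (hzD : ∀ n, z n ∈ D)
    (hx : ∀ n, x (n + 1) = T (y n))
    (hy : ∀ n, y n = (1 - a1 n) • T (x n) + a1 n • T (z n))
    (hz : ∀ n, z n = (1 - a2 n) • x n + a2 n • T (x n))
    (x' y' z' : ℕ → E) (hxD' : ∀ n, x' n ∈ D) (hyD' : ∀ n, y' n ∈ D) (hzD' : ∀ n, z' n ∈ D)
    (hx' : ∀ n, x' (n + 1) = S (y' n))
    (hy' : ∀ n, y' n = (1 - a1 n) • S (x' n) + a1 n • S (z' n))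
    (hz' : ∀ n, z' n = (1 - a2 n) • x' n + a2 n • S (x' n)) :
    ∀ n, ‖x (n + 1) - x' (n + 1)‖ ≤
      (1 - a1 n * a2 n * (1 - δ)) * ‖x n - x' n‖ +
        a1 n * a2 n * (1 - δ) *
          ((L * δ * (1 + δ) * ‖x n - T (x n)‖ + 2 * L * ‖y n - T (y n)‖ +
            2 * δ * L * ‖z n - T (z n)‖ + 5 * ε) / (1 - δ)) :=
  data_dependence_step_general D T S δ L hδ hL hT ε hε happrox a1 a2 ha1 ha2 hhalf x y z hxD hyD hzD
    hx hy hz x' y' z' hxD' hyD' hzD' hx' hy' hz'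
end

section
/- Let T : D → D be a weak-contraction with unique fixed point u*, and T̃ an approximate operator of T (‖Tx − T̃x‖ ≤ ε for all x). Let {x_n} and {x̃_n} be the Picard-S sequences for T and T̃ respectively with a_n¹, a_n² ∈ [0,1], 1/2 ≤ a_n¹ a_n², and ∑ a_n¹ a_n² = ∞. If T̃ ũ* = ũ* and x̃_n → ũ*, then ‖u* − ũ*‖ ≤ 5ε / (1 − δ). -/
theorem data_dependence {E : Type*} [NormedAddCommGroup E] [NormedSpace ℝ E]
    (D : Set E) (hDne : D.Nonempty) (hDcl : IsClosed D) (hDconv : Convex ℝ D)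
    (T S : E → E) (hTD : Set.MapsTo T D D) (hSD : Set.MapsTo S D D)
    (δ L : ℝ) (hδ : δ ∈ Set.Ioo (0 : ℝ) 1) (hL : 0 ≤ L)
    (hT : ∀ x ∈ D, ∀ y ∈ D, ‖T x - T y‖ ≤ δ * ‖x - y‖ + L * ‖y - T y‖)
    (u : E) (huD : u ∈ D) (hu : T u = u)
    (ε : ℝ) (hε : 0 < ε) (happrox : ∀ x ∈ D, ‖T x - S x‖ ≤ ε)
    (a1 a2 : ℕ → ℝ)
    (ha1 : ∀ n, a1 n ∈ Set.Icc (0 : ℝ) 1) (ha2 : ∀ n, a2 n ∈ Set.Icc (0 : ℝ) 1)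
    (hhalf : ∀ n, (1 : ℝ) / 2 ≤ a1 n * a2 n)
    (hdiv : Filter.Tendsto (fun N => ∑ k ∈ Finset.range N, a1 k * a2 k) Filter.atTop Filter.atTop)
    (x y z : ℕ → E) (hxD : ∀ n, x n ∈ D) (hyD : ∀ n, y n ∈ D) (hzD : ∀ n, z n ∈ D)
    (hx : ∀ n, x (n + 1) = T (y n))
    (hy : ∀ n, y n = (1 - a1 n) • T (x n) + a1 n • T (z n))
    (hz : ∀ n, z n = (1 - a2 n) • x n + a2 n • T (x n))
    (x' y' z' : ℕ → E) (hxD' : ∀ n, x' n ∈ D) (hyD' : ∀ n, y' n ∈ D) (hzD' : ∀ n, z' n ∈ D)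
    (hx' : ∀ n, x' (n + 1) = S (y' n))
    (hy' : ∀ n, y' n = (1 - a1 n) • S (x' n) + a1 n • S (z' n))
    (hz' : ∀ n, z' n = (1 - a2 n) • x' n + a2 n • S (x' n))
    (u' : E) (hu'D : u' ∈ D) (hu' : S u' = u')
    (hx'conv : Filter.Tendsto x' Filter.atTop (nhds u')) :
    ‖u - u'‖ ≤ 5 * ε / (1 - δ) := by
  obtain ⟨hδ0, hδ1⟩ := hδ
  have hcontr : ‖T u' - u‖ ≤ δ * ‖u' - u‖ := by
    have := hT u' hu'D u huD
    rw [hu] at this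
    simpa using this
  have h2 : ‖T u' - S u'‖ ≤ ε := happrox u' hu'D
  have hna : ‖u - u'‖ ≤ δ * ‖u - u'‖ + ε := by
    calc ‖u - u'‖ = ‖(u - T u') + (T u' - S u')‖ := by rw [hu']; abel_nf
      _ ≤ ‖u - T u'‖ + ‖T u' - S u'‖ := norm_add_le _ _
      _ ≤ δ * ‖u - u'‖ + ε := by
          rw [norm_sub_rev, norm_sub_rev u u']
          exact add_le_add hcontr h2
  have h1δ : 0 < 1 - δ := by linarith
  rw [le_div_iff₀ h1δ]
  nlinarith [norm_nonneg (u - u'), hε.le]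
end
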